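/- arXiv:2311.04471 — 2 statements merged into one kernel-verified Lean document; each statement's English description precedes it below -/
import Mathlib

section
/- Let s > 1 be a real number. For every ε ∈ [0,1] and every u ∈ ℝ one has |f_ε′(u) − f_0′(u)| ≤ ε·|u|^{s−1}·( s·ln(ln(e + |u|)) + 1/ln(e + |u|) ). -/
/-- The non-power nonlinearity `f_ε(u) = |u|^{s-1} u / (ln(e+|u|))^ε`. -/
noncomputable def fNP (s ε u : ℝ) : ℝ :=
  |u| ^ (s - 1) * u / Real.log (Real.exp 1 + |u|) ^ ε

lemma fNP_hasDerivAt_pos (s ε : ℝ) (hs : 1 < s) (u : ℝ) (hu : 0 < u) :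
    HasDerivAt (fNP s ε)
      (s * u ^ (s - 1) / Real.log (Real.exp 1 + u) ^ ε
        - ε * u ^ s / ((Real.exp 1 + u) * Real.log (Real.exp 1 + u) ^ (ε + 1))) u := by
  have hA : (0:ℝ) < Real.exp 1 + u := by positivity
  set L := Real.log (Real.exp 1 + u) with hLdef
  have hL1 : 1 ≤ L := by
    rw [hLdef]
    have : Real.exp 1 ≤ Real.exp 1 + u := by linarith
    calc (1:ℝ) = Real.log (Real.exp 1) := (Real.log_exp 1).symm
    _ ≤ _ := Real.log_le_log (Real.exp_pos 1) this
  have hL0 : 0 < L := lt_of_lt_of_le one_pos hL1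
  have hnum : HasDerivAt (fun x : ℝ => x ^ s) (s * u ^ (s - 1)) u :=
    Real.hasDerivAt_rpow_const (Or.inl hu.ne')
  have hlog : HasDerivAt (fun x : ℝ => Real.log (Real.exp 1 + x)) ((Real.exp 1 + u)⁻¹) u := by
    have h1 : HasDerivAt (fun x : ℝ => Real.exp 1 + x) 1 u := by
      simpa using (hasDerivAt_id u).const_add (Real.exp 1)
    have := (Real.hasDerivAt_log hA.ne').comp u h1
    rw [mul_one] at this; exact this
  have hden : HasDerivAt (fun x : ℝ => Real.log (Real.exp 1 + x) ^ ε)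
      (ε * L ^ (ε - 1) * (Real.exp 1 + u)⁻¹) u := by
    have := (Real.hasDerivAt_rpow_const (p := ε) (Or.inl hL0.ne')).comp u hlog
    exact this
  have hdiv := hnum.div hden (by positivity : L ^ ε ≠ 0)
  have heq : fNP s ε =ᶠ[nhds u] fun x => x ^ s / Real.log (Real.exp 1 + x) ^ ε := by
    filter_upwards [eventually_gt_nhds hu] with x hx
    have : |x| = x := abs_of_pos hx
    simp only [fNP, this]
    rw [← Real.rpow_add_one hx.ne' (s - 1)]
    ring_nf
  refine HasDerivAt.congr_deriv (hdiv.congr_of_eventuallyEq heq) ?_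
  have h1 : L ^ (ε - 1) = L ^ ε / L := by
    rw [Real.rpow_sub hL0, Real.rpow_one]
  have h2 : L ^ (ε + 1) = L ^ ε * L := by
    rw [Real.rpow_add hL0, Real.rpow_one]
  rw [h1, h2]
  rw [← hLdef]
  have hLε : (0:ℝ) < L ^ ε := by positivity
  field_simp

lemma fNP_hasDerivAt_zero (s ε : ℝ) (hs : 1 < s) (hε : 0 ≤ ε) :
    HasDerivAt (fNP s ε) 0 0 := by
  rw [hasDerivAt_iff_isLittleO]
  have hbound : ∀ x : ℝ, ‖fNP s ε x - fNP s ε 0 - (x - 0) * 0‖ ≤ ‖|x| ^ (s - 1) * x‖ := by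
    intro x
    have hA : (0:ℝ) < Real.exp 1 + |x| := by positivity
    have hL1 : 1 ≤ Real.log (Real.exp 1 + |x|) := by
      calc (1:ℝ) = Real.log (Real.exp 1) := (Real.log_exp 1).symm
      _ ≤ _ := Real.log_le_log (Real.exp_pos 1) (by simp [abs_nonneg])
    have hLε : 1 ≤ Real.log (Real.exp 1 + |x|) ^ ε := Real.one_le_rpow hL1 hε
    have h0 : fNP s ε 0 = 0 := by
      simp [fNP, Real.zero_rpow (by linarith : s - 1 ≠ 0)]
    rw [h0]
    simp only [sub_zero, mul_zero, fNP, norm_div, Real.norm_eq_abs]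
    rw [div_le_iff₀ (by positivity)]
    nlinarith [abs_nonneg (|x| ^ (s-1) * x), abs_nonneg ((Real.log (Real.exp 1 + |x|)) ^ ε),
      abs_of_nonneg (le_trans zero_le_one hLε)]
  refine Asymptotics.IsBigO.trans_isLittleO (Asymptotics.isBigO_of_le _ hbound) ?_
  have htend : Filter.Tendsto (fun x : ℝ => |x| ^ (s - 1)) (nhds 0) (nhds 0) := by
    have : Filter.Tendsto (fun x : ℝ => |x|) (nhds 0) (nhds 0) := by
      have := continuous_abs.tendsto (0:ℝ)
      simpa using this
    have h2 : Filter.Tendsto (fun t : ℝ => t ^ (s - 1)) (nhds 0) (nhds 0) := by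
      have := (Real.continuousAt_rpow_const 0 (s-1) (Or.inr (by linarith))).tendsto
      simpa [Real.zero_rpow (by linarith : s - 1 ≠ 0)] using this
    exact h2.comp this
  rw [Asymptotics.isLittleO_iff]
  intro c hc
  filter_upwards [htend.eventually (Metric.ball_mem_nhds 0 hc)] with x hx
  simp only [Metric.mem_ball, Real.dist_eq, sub_zero] at hx
  have h1 : |x| ^ (s - 1) ≤ c := by
    have := hx
    rw [abs_of_nonneg (by positivity : (0:ℝ) ≤ |x| ^ (s-1))] at this
    linarith
  simp only [Real.norm_eq_abs, id]
  calc ‖|x| ^ (s - 1) * x‖ = |x| ^ (s - 1) * |x| := by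
        rw [Real.norm_eq_abs, abs_mul, abs_of_nonneg (by positivity : (0:ℝ) ≤ |x| ^ (s-1))]
  _ ≤ c * |x| := mul_le_mul_of_nonneg_right h1 (abs_nonneg x)
  _ = c * |x - 0| := by rw [sub_zero]

lemma fNP_odd (s ε x : ℝ) : fNP s ε (-x) = - fNP s ε x := by
  simp [fNP, neg_div]

lemma fNP_hasDerivAt_of_neg {s ε u d : ℝ} (h : HasDerivAt (fNP s ε) d (-u)) :
    HasDerivAt (fNP s ε) d u := by
  have h2 : HasDerivAt (fun x : ℝ => fNP s ε (-x)) (d * (-1)) u :=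
    h.comp u (hasDerivAt_neg u)
  have h3 := h2.neg
  have : (fun x : ℝ => -(fNP s ε (-x))) = fNP s ε := by
    funext x; rw [fNP_odd]; ring
  rw [show (-fun x : ℝ => fNP s ε (-x)) = fNP s ε from this] at h3
  simpa using h3

lemma fNP_hasDerivAt (s ε : ℝ) (hs : 1 < s) (hε : 0 ≤ ε) (u : ℝ) :
    HasDerivAt (fNP s ε)
      (s * |u| ^ (s - 1) / Real.log (Real.exp 1 + |u|) ^ ε
        - ε * |u| ^ s / ((Real.exp 1 + |u|) * Real.log (Real.exp 1 + |u|) ^ (ε + 1))) u := by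
  rcases lt_trichotomy u 0 with hu | hu | hu
  · have habs : |u| = -u := abs_of_neg hu
    refine fNP_hasDerivAt_of_neg ?_
    rw [habs]
    exact fNP_hasDerivAt_pos s ε hs (-u) (by linarith)
  · subst hu
    rw [abs_zero, Real.zero_rpow (by linarith : s - 1 ≠ 0),
      Real.zero_rpow (by linarith : s ≠ 0)]
    simpa using fNP_hasDerivAt_zero s ε hs hε
  · rw [abs_of_pos hu]
    exact fNP_hasDerivAt_pos s ε hs u hu

theorem stmt2 (s : ℝ) (hs : 1 < s) (ε : ℝ) (hε : ε ∈ Set.Icc (0 : ℝ) 1) (u : ℝ) :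
    |deriv (fNP s ε) u - deriv (fNP s 0) u| ≤
      ε * |u| ^ (s - 1) *
        (s * Real.log (Real.log (Real.exp 1 + |u|)) + 1 / Real.log (Real.exp 1 + |u|)) := by
  obtain ⟨hε0, hε1⟩ := hε
  set t := |u| with htdef
  have ht0 : 0 ≤ t := abs_nonneg u
  have hA : (0:ℝ) < Real.exp 1 + t := by positivity
  set L := Real.log (Real.exp 1 + t) with hLdef
  have hL1 : 1 ≤ L := by
    rw [hLdef]
    calc (1:ℝ) = Real.log (Real.exp 1) := (Real.log_exp 1).symm
    _ ≤ _ := Real.log_le_log (Real.exp_pos 1) (by linarith)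
  have hL0 : 0 < L := lt_of_lt_of_le one_pos hL1
  have hLε : (1:ℝ) ≤ L ^ ε := Real.one_le_rpow hL1 hε0
  have hLε0 : (0:ℝ) < L ^ ε := lt_of_lt_of_le one_pos hLε
  have hD1 := (fNP_hasDerivAt s ε hs hε0 u).deriv
  have hD0 := (fNP_hasDerivAt s 0 hs le_rfl u).deriv
  rw [hD1, hD0]
  rw [Real.rpow_zero, zero_add, Real.rpow_one, div_one, zero_mul, zero_div, sub_zero]
  set P := s * t ^ (s - 1) * (1 - 1 / L ^ ε) with hPdef
  set Q := ε * t ^ s / ((Real.exp 1 + t) * L ^ (ε + 1)) with hQdef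
  have hLε1 : (0:ℝ) < L ^ (ε + 1) := Real.rpow_pos_of_pos hL0 _
  have hdiff : s * t ^ (s - 1) / L ^ ε - Q - s * t ^ (s - 1) = -(P + Q) := by
    rw [hPdef]; field_simp; ring
  rw [hdiff, abs_neg]
  have hlogL : 0 ≤ Real.log L := Real.log_nonneg hL1
  have htp : (0:ℝ) ≤ t ^ (s - 1) := Real.rpow_nonneg ht0 _
  have hP0 : 0 ≤ P := by
    have : 1 / L ^ ε ≤ 1 := by
      rw [div_le_one hLε0]; exact hLε
    have hs0 : (0:ℝ) ≤ s := by linarith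
    have := mul_nonneg (mul_nonneg hs0 htp) (by linarith : (0:ℝ) ≤ 1 - 1 / L ^ ε)
    simpa [hPdef, mul_assoc] using this
  have hQ0 : 0 ≤ Q := by
    rw [hQdef]
    positivity
  rw [abs_of_nonneg (by linarith : (0:ℝ) ≤ P + Q)]
  -- bound P
  have hPle : P ≤ s * t ^ (s - 1) * (ε * Real.log L) := by
    have hkey : 1 - 1 / L ^ ε ≤ ε * Real.log L := by
      have hrw : 1 / L ^ ε = Real.exp (-(Real.log L * ε)) := by
        rw [Real.rpow_def_of_pos hL0, one_div, ← Real.exp_neg]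
      rw [hrw]
      have := Real.add_one_le_exp (-(Real.log L * ε))
      nlinarith
    exact mul_le_mul_of_nonneg_left hkey (mul_nonneg (by linarith) htp)
  -- bound Q
  have hts : t ^ s = t ^ (s - 1) * t := by
    rcases eq_or_lt_of_le ht0 with h | h
    · rw [← h, Real.zero_rpow (by linarith : s ≠ 0), mul_zero]
    · rw [← Real.rpow_add_one h.ne' (s - 1)]; ring_nf
  have hQle : Q ≤ ε * t ^ (s - 1) * (1 / L) := by
    rw [hQdef, hts]
    have hfrac : t / ((Real.exp 1 + t) * L ^ (ε + 1)) ≤ 1 / L := by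
      rw [div_le_div_iff₀ (by positivity) hL0]
      have h1 : t ≤ Real.exp 1 + t := by
        have := Real.exp_pos 1; linarith
      have h2 : L ≤ L ^ (ε + 1) := by
        have := Real.rpow_le_rpow_of_exponent_le hL1 (by linarith : (1:ℝ) ≤ ε + 1)
        rwa [Real.rpow_one] at this
      calc t * L ≤ (Real.exp 1 + t) * L ^ (ε + 1) :=
        mul_le_mul h1 h2 (le_of_lt hL0) (le_of_lt hA)
      _ = 1 * ((Real.exp 1 + t) * L ^ (ε + 1)) := by ring
    calc ε * (t ^ (s - 1) * t) / ((Real.exp 1 + t) * L ^ (ε + 1))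
        = ε * t ^ (s - 1) * (t / ((Real.exp 1 + t) * L ^ (ε + 1))) := by ring
    _ ≤ ε * t ^ (s - 1) * (1 / L) :=
        mul_le_mul_of_nonneg_left hfrac (mul_nonneg hε0 htp)
  calc P + Q ≤ s * t ^ (s - 1) * (ε * Real.log L) + ε * t ^ (s - 1) * (1 / L) := by
        linarith
  _ = ε * t ^ (s - 1) * (s * Real.log L + 1 / L) := by ring
end

section
/- Let s ≥ 2 be a real number. There exists a constant C > 0 depending only on s such that for every ε ∈ [0,1] and all u, v ∈ ℝ one has |f_ε′(u + v) − f_ε′(u)| ≤ C·(|u|^{s−2} + |v|^{s−2})·|v|. -/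
open Real

/-- First derivative of `fNP`. -/
noncomputable def gNP (s ε u : ℝ) : ℝ :=
  s * |u| ^ (s - 1) / Real.log (Real.exp 1 + |u|) ^ ε -
    ε * |u| ^ s / (Real.log (Real.exp 1 + |u|) ^ (ε + 1) * (Real.exp 1 + |u|))

/-- Absolute value of second derivative of `fNP` away from 0 (up to sign). -/
noncomputable def hNP (s ε u : ℝ) : ℝ :=
  s * (s - 1) * |u| ^ (s - 2) / Real.log (Real.exp 1 + |u|) ^ ε -
    2 * s * ε * |u| ^ (s - 1) / (Real.log (Real.exp 1 + |u|) ^ (ε + 1) * (Real.exp 1 + |u|)) +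
    ε * (ε + 1) * |u| ^ s / (Real.log (Real.exp 1 + |u|) ^ (ε + 2) * (Real.exp 1 + |u|) ^ (2:ℕ)) +
    ε * |u| ^ s / (Real.log (Real.exp 1 + |u|) ^ (ε + 1) * (Real.exp 1 + |u|) ^ (2:ℕ))

noncomputable def sgn (u : ℝ) : ℝ := if 0 < u then 1 else -1

lemma E_pos (u : ℝ) : 0 < Real.exp 1 + |u| := by positivity

lemma logE_ge_one (u : ℝ) : 1 ≤ Real.log (Real.exp 1 + |u|) := by
  have h : Real.exp 1 ≤ Real.exp 1 + |u| := le_add_of_nonneg_right (abs_nonneg u)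
  calc 1 = Real.log (Real.exp 1) := (Real.log_exp 1).symm
  _ ≤ _ := Real.log_le_log (Real.exp_pos 1) h

lemma logE_rpow_ge_one (u : ℝ) {t : ℝ} (ht : 0 ≤ t) :
    1 ≤ Real.log (Real.exp 1 + |u|) ^ t :=
  Real.one_le_rpow (logE_ge_one u) ht

lemma logE_rpow_pos (u t : ℝ) : 0 < Real.log (Real.exp 1 + |u|) ^ t :=
  Real.rpow_pos_of_pos (lt_of_lt_of_le one_pos (logE_ge_one u)) t

lemma sgn_abs {u : ℝ} (hu : u ≠ 0) : sgn u * u = |u| := by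
  rcases hu.lt_or_gt with h | h
  · simp [sgn, not_lt.2 h.le, abs_of_neg h]
  · simp [sgn, h, abs_of_pos h]

lemma hasDerivAt_absR {u : ℝ} (hu : u ≠ 0) : HasDerivAt (fun x : ℝ => |x|) (sgn u) u := by
  unfold sgn
  rcases hu.lt_or_gt with h | h
  · rw [if_neg (not_lt.2 h.le)]; exact hasDerivAt_abs_neg h
  · rw [if_pos h]; exact hasDerivAt_abs_pos h
lemma sgn_sq (u : ℝ) : sgn u * sgn u = 1 := by
  by_cases h : 0 < u <;> simp [sgn, h]

lemma abs_fNP_le (s ε : ℝ) (hs : 2 ≤ s) (hε0 : 0 ≤ ε) (x : ℝ) :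
    |fNP s ε x| ≤ |x| ^ (s - 1) * |x| := by
  have h1 : |fNP s ε x| = |x| ^ (s - 1) * |x| / Real.log (Real.exp 1 + |x|) ^ ε := by
    rw [fNP, abs_div, abs_mul, abs_of_nonneg (Real.rpow_nonneg (abs_nonneg x) _),
      abs_of_pos (logE_rpow_pos x ε)]
  rw [h1]
  exact div_le_self (by positivity) (logE_rpow_ge_one x hε0)

lemma hasDerivAt_fNP_zero (s ε : ℝ) (hs : 2 ≤ s) (hε0 : 0 ≤ ε) :
    HasDerivAt (fNP s ε) 0 0 := by
  rw [hasDerivAt_iff_tendsto_slope]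
  have hf0 : fNP s ε 0 = 0 := by simp [fNP]
  have hb : ∀ x : ℝ, ‖slope (fNP s ε) 0 x‖ ≤ |x| ^ (s - 1) := by
    intro x
    rcases eq_or_ne x 0 with rfl | hx
    · simp [slope]
      positivity
    · rw [slope_def_field, hf0]
      have h2 : ‖(fNP s ε x - 0) / (x - 0)‖ = |fNP s ε x| / |x| := by
        simp [abs_div]
      rw [h2, div_le_iff₀ (abs_pos.2 hx)]
      exact abs_fNP_le s ε hs hε0 x
  have hcont : Filter.Tendsto (fun x : ℝ => |x| ^ (s - 1)) (nhds 0) (nhds 0) := by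
    have h1 : ContinuousAt (fun y : ℝ => y ^ (s - 1)) 0 :=
      Real.continuousAt_rpow_const 0 (s - 1) (Or.inr (by linarith))
    have habs : ContinuousAt (fun x : ℝ => |x|) (0 : ℝ) := continuous_abs.continuousAt
    have h2 : ContinuousAt (fun x : ℝ => |x| ^ (s - 1)) 0 := by
      have := ContinuousAt.comp (show ContinuousAt (fun y : ℝ => y ^ (s - 1)) (|(0:ℝ)|) by
        simpa using h1) habs
      exact this
    have := h2.tendsto
    simpa [Real.zero_rpow (by linarith : s - 1 ≠ 0)] using this
  exact squeeze_zero_norm hb (hcont.mono_left nhdsWithin_le_nhds)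
lemma hasDerivAt_fNP (s ε : ℝ) (hs : 2 ≤ s) (hε0 : 0 ≤ ε) (u : ℝ) :
    HasDerivAt (fNP s ε) (gNP s ε u) u := by
  rcases eq_or_ne u 0 with rfl | hu
  · have hg0 : gNP s ε 0 = 0 := by
      simp [gNP, Real.zero_rpow (by linarith : s - 1 ≠ 0),
        Real.zero_rpow (by linarith : s ≠ 0)]
    rw [hg0]
    exact hasDerivAt_fNP_zero s ε hs hε0
  · have ha : (0:ℝ) < |u| := abs_pos.2 hu
    have hE := E_pos u
    have hL1 : 1 ≤ Real.log (Real.exp 1 + |u|) := logE_ge_one u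
    have hL0 : (0:ℝ) < Real.log (Real.exp 1 + |u|) := lt_of_lt_of_le one_pos hL1
    have habs := hasDerivAt_absR hu
    have hB : HasDerivAt (fun x : ℝ => |x| ^ (s-1)) (sgn u * (s-1) * |u| ^ (s-1-1)) u :=
      habs.rpow_const (Or.inl (ne_of_gt ha))
    have hA : HasDerivAt (fun x : ℝ => |x| ^ (s-1) * x)
        (sgn u * (s-1) * |u| ^ (s-1-1) * u + |u| ^ (s-1) * 1) u := hB.mul (hasDerivAt_id u)
    have hEd : HasDerivAt (fun x : ℝ => Real.exp 1 + |x|) (sgn u) u := habs.const_add _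
    have hLd : HasDerivAt (fun x : ℝ => Real.log (Real.exp 1 + |x|))
        (sgn u / (Real.exp 1 + |u|)) u := by
      have := hEd.log (ne_of_gt hE)
      simpa using this
    have hD : HasDerivAt (fun x : ℝ => Real.log (Real.exp 1 + |x|) ^ ε)
        (sgn u / (Real.exp 1 + |u|) * ε * Real.log (Real.exp 1 + |u|) ^ (ε-1)) u :=
      hLd.rpow_const (Or.inl (ne_of_gt hL0))
    have hq := hA.div hD (ne_of_gt (logE_rpow_pos u ε))
    refine hq.congr_deriv (Eq.symm ?_)
    have hσ : sgn u * u = |u| := sgn_abs hu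
    have e1 : |u| ^ (s-1-1) * |u| = |u| ^ (s-1) := by
      rw [← Real.rpow_add_one (ne_of_gt ha)]; ring_nf
    have e2 : |u| ^ (s-1) * |u| = |u| ^ s := by
      rw [← Real.rpow_add_one (ne_of_gt ha)]; ring_nf
    have e3 : Real.log (Real.exp 1 + |u|) ^ (ε-1) * Real.log (Real.exp 1 + |u|)
        = Real.log (Real.exp 1 + |u|) ^ ε := by
      rw [← Real.rpow_add_one (ne_of_gt hL0)]; ring_nf
    have e4 : Real.log (Real.exp 1 + |u|) ^ ε * Real.log (Real.exp 1 + |u|)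
        = Real.log (Real.exp 1 + |u|) ^ (ε+1) := by
      rw [← Real.rpow_add_one (ne_of_gt hL0)]
    unfold gNP
    set a := |u|
    set L := Real.log (Real.exp 1 + |u|)
    set E := Real.exp 1 + |u|
    set σ := sgn u
    have hDε : L ^ ε ≠ 0 := ne_of_gt (logE_rpow_pos u ε)
    have hD1 : L ^ (ε+1) ≠ 0 := ne_of_gt (logE_rpow_pos u (ε+1))
    have hDm : L ^ (ε-1) ≠ 0 := ne_of_gt (logE_rpow_pos u (ε-1))
    have n1 : (σ*(s-1)*a^(s-1-1)*u + a^(s-1)*1) = s * a^(s-1) := by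
      have h : σ*(s-1)*a^(s-1-1)*u = (s-1)*(a^(s-1-1)*a) := by rw [← hσ]; ring
      rw [h, e1]; ring
    have n2 : a^(s-1)*u*(σ/E*ε*L^(ε-1)) = ε*a^s*L^(ε-1)/E := by
      have h : a^(s-1)*u*(σ/E*ε*L^(ε-1)) = (a^(s-1)*(σ*u))*ε*L^(ε-1)/E := by ring
      rw [h, hσ, e2]; ring
    rw [n1, n2]
    have e5 : L^(ε+1)*L^(ε-1) = (L^ε)^2 := by rw [← e4, ← e3]; ring
    field_simp
    linear_combination (ε * a ^ s) * e5
lemma hasDerivAt_gNP (s ε : ℝ) (hs : 2 ≤ s) (hε0 : 0 ≤ ε) {u : ℝ} (hu : u ≠ 0) :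
    HasDerivAt (gNP s ε) (sgn u * hNP s ε u) u := by
  have ha : (0:ℝ) < |u| := abs_pos.2 hu
  have hE := E_pos u
  have hL1 : 1 ≤ Real.log (Real.exp 1 + |u|) := logE_ge_one u
  have hL0 : (0:ℝ) < Real.log (Real.exp 1 + |u|) := lt_of_lt_of_le one_pos hL1
  have habs := hasDerivAt_absR hu
  have hB : HasDerivAt (fun x : ℝ => |x| ^ (s-1)) (sgn u * (s-1) * |u| ^ (s-1-1)) u :=
    habs.rpow_const (Or.inl (ne_of_gt ha))
  have hsB : HasDerivAt (fun x : ℝ => s * |x| ^ (s-1)) (s * (sgn u * (s-1) * |u| ^ (s-1-1))) u :=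
    hB.const_mul s
  have hEd : HasDerivAt (fun x : ℝ => Real.exp 1 + |x|) (sgn u) u := habs.const_add _
  have hLd : HasDerivAt (fun x : ℝ => Real.log (Real.exp 1 + |x|))
      (sgn u / (Real.exp 1 + |u|)) u := by
    have := hEd.log (ne_of_gt hE)
    simpa using this
  have hDε : HasDerivAt (fun x : ℝ => Real.log (Real.exp 1 + |x|) ^ ε)
      (sgn u / (Real.exp 1 + |u|) * ε * Real.log (Real.exp 1 + |u|) ^ (ε-1)) u :=
    hLd.rpow_const (Or.inl (ne_of_gt hL0))
  have hT1 := hsB.div hDε (ne_of_gt (logE_rpow_pos u ε))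
  have hP : HasDerivAt (fun x : ℝ => |x| ^ s) (sgn u * s * |u| ^ (s-1)) u :=
    habs.rpow_const (Or.inl (ne_of_gt ha))
  have hεP : HasDerivAt (fun x : ℝ => ε * |x| ^ s) (ε * (sgn u * s * |u| ^ (s-1))) u :=
    hP.const_mul ε
  have hD1 : HasDerivAt (fun x : ℝ => Real.log (Real.exp 1 + |x|) ^ (ε+1))
      (sgn u / (Real.exp 1 + |u|) * (ε+1) * Real.log (Real.exp 1 + |u|) ^ (ε+1-1)) u :=
    hLd.rpow_const (Or.inl (ne_of_gt hL0))
  have hDen := hD1.mul hEd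
  have hT2 := hεP.div hDen
    (by positivity : (Real.log (Real.exp 1 + |u|) ^ (ε+1) * (Real.exp 1 + |u|)) ≠ 0)
  have final := hT1.sub hT2
  have hfun : gNP s ε = fun x : ℝ => s * |x| ^ (s-1) / Real.log (Real.exp 1 + |x|) ^ ε -
      ε * |x| ^ s / (Real.log (Real.exp 1 + |x|) ^ (ε+1) * (Real.exp 1 + |x|)) := rfl
  rw [hfun]
  refine final.congr_deriv (Eq.symm ?_)
  simp only [Pi.mul_apply]
  unfold hNP
  set a := |u|
  set L := Real.log (Real.exp 1 + |u|)
  set E := Real.exp 1 + |u|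
  set σ := sgn u
  have hane : a ≠ 0 := ne_of_gt ha
  have hLne : L ≠ 0 := ne_of_gt hL0
  have r1 : L ^ ε = L ^ (ε-1) * L := by
    rw [← Real.rpow_add_one hLne]; ring_nf
  have r2 : L ^ (ε+1) = L ^ (ε-1) * L * L := by
    rw [← r1, ← Real.rpow_add_one hLne]
  have r3 : L ^ (ε+2) = L ^ (ε-1) * L * L * L := by
    rw [← r2, ← Real.rpow_add_one hLne]; ring_nf
  have r4 : a ^ (s-1) = a ^ (s-1-1) * a := by
    rw [← Real.rpow_add_one hane]; ring_nf
  have r5 : a ^ s = a ^ (s-1-1) * a * a := by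
    rw [← r4, ← Real.rpow_add_one hane]; ring_nf
  have r6 : a ^ (s-2) = a ^ (s-1-1) := by rw [show s-1-1 = s-2 by ring]
  have r7 : (ε+1-1) = ε := by ring
  rw [r7] at *
  rw [r6, r5, r4, r3, r2, r1]
  have hLm : L ^ (ε-1) ≠ 0 := ne_of_gt (logE_rpow_pos u (ε-1))
  field_simp
  ring
lemma rpow_mul_self (x : ℝ) (hx : 0 ≤ x) {t : ℝ} (ht : t + 1 ≠ 0) :
    x ^ t * x = x ^ (t + 1) := by
  rcases eq_or_lt_of_le hx with h | h
  · rw [← h, Real.zero_rpow ht]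
    simp
  · rw [Real.rpow_add_one (ne_of_gt h)]

lemma hNP_bound (s ε : ℝ) (hs : 2 ≤ s) (hε0 : 0 ≤ ε) (hε1 : ε ≤ 1) {u : ℝ} (hu : u ≠ 0) :
    |hNP s ε u| ≤ (s * s + s + 3) * |u| ^ (s - 2) := by
  have ha : (0:ℝ) < |u| := abs_pos.2 hu
  have hE := E_pos u
  have hL1 : 1 ≤ Real.log (Real.exp 1 + |u|) := logE_ge_one u
  rw [hNP]
  set a := |u| with ha_def
  set L := Real.log (Real.exp 1 + |u|)
  set E := Real.exp 1 + |u| with hE_def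
  have haE : a ≤ E := le_add_of_nonneg_left (Real.exp_pos 1).le
  have hP2 : (0:ℝ) ≤ a ^ (s-2) := Real.rpow_nonneg (abs_nonneg u) _
  have hP1 : (0:ℝ) ≤ a ^ (s-1) := Real.rpow_nonneg (abs_nonneg u) _
  have hP0 : (0:ℝ) ≤ a ^ s := Real.rpow_nonneg (abs_nonneg u) _
  have b1 : a ^ (s-1) ≤ a ^ (s-2) * E := by
    have h : a ^ (s-2) * a = a ^ (s-1) := by
      rw [rpow_mul_self a (abs_nonneg u) (ne_of_gt (by linarith : (0:ℝ) < s - 2 + 1))]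
      ring_nf
    calc a ^ (s-1) = a ^ (s-2) * a := h.symm
    _ ≤ a ^ (s-2) * E := by gcongr
  have b2 : a ^ s ≤ a ^ (s-2) * E ^ (2:ℕ) := by
    have h1 : a ^ (s-1) * a = a ^ s := by
      rw [rpow_mul_self a (abs_nonneg u) (ne_of_gt (by linarith : (0:ℝ) < s - 1 + 1))]
      norm_num
    calc a ^ s = a ^ (s-1) * a := h1.symm
    _ ≤ (a ^ (s-2) * E) * E := mul_le_mul b1 haE (abs_nonneg u) (by positivity)
    _ = a ^ (s-2) * E ^ (2:ℕ) := by ring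
  have hLε : 1 ≤ L ^ ε := logE_rpow_ge_one u hε0
  have hLε1 : 1 ≤ L ^ (ε+1) := logE_rpow_ge_one u (by linarith)
  have hLε2 : 1 ≤ L ^ (ε+2) := logE_rpow_ge_one u (by linarith)
  have hE2 : (0:ℝ) < E ^ (2:ℕ) := by positivity
  have hnum1 : (0:ℝ) ≤ s * (s-1) * a ^ (s-2) :=
    mul_nonneg (mul_nonneg (by linarith) (by linarith)) hP2
  have t1u : s * (s-1) * a ^ (s-2) / L ^ ε ≤ s * (s-1) * a ^ (s-2) :=
    div_le_self hnum1 hLε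
  have t1l : 0 ≤ s * (s-1) * a ^ (s-2) / L ^ ε := div_nonneg hnum1 (by linarith)
  have t2u : 2 * s * ε * a ^ (s-1) / (L ^ (ε+1) * E) ≤ 2 * s * a ^ (s-2) := by
    have h : 2 * s * ε * a ^ (s-1) / (L ^ (ε+1) * E) ≤ 2 * s * 1 * (a ^ (s-2) * E) / (1 * E) := by
      gcongr <;> first | positivity | linarith
    calc _ ≤ 2 * s * 1 * (a ^ (s-2) * E) / (1 * E) := h
    _ = 2 * s * a ^ (s-2) := by field_simp
  have t2l : 0 ≤ 2 * s * ε * a ^ (s-1) / (L ^ (ε+1) * E) := by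
    apply div_nonneg _ (by positivity)
    have h2s : (0:ℝ) ≤ 2 * s * ε := by nlinarith
    exact mul_nonneg h2s hP1
  have t3u : ε * (ε+1) * a ^ s / (L ^ (ε+2) * E ^ (2:ℕ)) ≤ 2 * a ^ (s-2) := by
    have h : ε * (ε+1) * a ^ s / (L ^ (ε+2) * E ^ (2:ℕ)) ≤
        1 * 2 * (a ^ (s-2) * E ^ (2:ℕ)) / (1 * E ^ (2:ℕ)) := by
      gcongr <;> first | positivity | linarith
    calc _ ≤ 1 * 2 * (a ^ (s-2) * E ^ (2:ℕ)) / (1 * E ^ (2:ℕ)) := h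
    _ = 2 * a ^ (s-2) := by field_simp
  have t3l : 0 ≤ ε * (ε+1) * a ^ s / (L ^ (ε+2) * E ^ (2:ℕ)) := by
    apply div_nonneg _ (by positivity)
    exact mul_nonneg (mul_nonneg hε0 (by linarith)) hP0
  have t4u : ε * a ^ s / (L ^ (ε+1) * E ^ (2:ℕ)) ≤ a ^ (s-2) := by
    have h : ε * a ^ s / (L ^ (ε+1) * E ^ (2:ℕ)) ≤
        1 * (a ^ (s-2) * E ^ (2:ℕ)) / (1 * E ^ (2:ℕ)) := by
      gcongr <;> first | positivity | linarith
    calc _ ≤ 1 * (a ^ (s-2) * E ^ (2:ℕ)) / (1 * E ^ (2:ℕ)) := h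
    _ = a ^ (s-2) := by field_simp
  have t4l : 0 ≤ ε * a ^ s / (L ^ (ε+1) * E ^ (2:ℕ)) := by
    apply div_nonneg _ (by positivity)
    exact mul_nonneg hε0 hP0
  rw [abs_le]
  constructor <;> nlinarith
lemma gNP_bound (s ε : ℝ) (hs : 2 ≤ s) (hε0 : 0 ≤ ε) (hε1 : ε ≤ 1) (u : ℝ) :
    |gNP s ε u| ≤ (s + 1) * |u| ^ (s - 1) := by
  rcases eq_or_ne u 0 with rfl | hu
  · have hg0 : gNP s ε 0 = 0 := by
      simp [gNP, Real.zero_rpow (by linarith : s - 1 ≠ 0),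
        Real.zero_rpow (by linarith : s ≠ 0)]
    rw [hg0]
    simp only [abs_zero]
    positivity
  · have ha : (0:ℝ) < |u| := abs_pos.2 hu
    have hE := E_pos u
    have hL1 : 1 ≤ Real.log (Real.exp 1 + |u|) := logE_ge_one u
    rw [gNP]
    set a := |u|
    set L := Real.log (Real.exp 1 + |u|)
    set E := Real.exp 1 + |u|
    have haE : a ≤ E := le_add_of_nonneg_left (Real.exp_pos 1).le
    have hP1 : (0:ℝ) ≤ a ^ (s-1) := Real.rpow_nonneg (abs_nonneg u) _
    have hP0 : (0:ℝ) ≤ a ^ s := Real.rpow_nonneg (abs_nonneg u) _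
    have hLε : 1 ≤ L ^ ε := logE_rpow_ge_one u hε0
    have hLε1 : 1 ≤ L ^ (ε+1) := logE_rpow_ge_one u (by linarith)
    have b1 : a ^ s ≤ a ^ (s-1) * E := by
      have h : a ^ (s-1) * a = a ^ s := by
        rw [rpow_mul_self a (abs_nonneg u) (ne_of_gt (by linarith : (0:ℝ) < s - 1 + 1))]
        ring_nf
      calc a ^ s = a ^ (s-1) * a := h.symm
      _ ≤ a ^ (s-1) * E := by gcongr
    have t1u : s * a ^ (s-1) / L ^ ε ≤ s * a ^ (s-1) :=
      div_le_self (mul_nonneg (by linarith) hP1) hLε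
    have t1l : 0 ≤ s * a ^ (s-1) / L ^ ε :=
      div_nonneg (mul_nonneg (by linarith) hP1) (by linarith)
    have t2u : ε * a ^ s / (L ^ (ε+1) * E) ≤ a ^ (s-1) := by
      have h : ε * a ^ s / (L ^ (ε+1) * E) ≤ 1 * (a ^ (s-1) * E) / (1 * E) := by
        gcongr <;> first | positivity | linarith
      calc _ ≤ 1 * (a ^ (s-1) * E) / (1 * E) := h
      _ = a ^ (s-1) := by field_simp
    have t2l : 0 ≤ ε * a ^ s / (L ^ (ε+1) * E) :=
      div_nonneg (mul_nonneg hε0 hP0) (by positivity)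
    rw [abs_le]
    constructor <;> nlinarith
theorem stmt3 (s : ℝ) (hs : 2 ≤ s) :
    ∃ C > 0, ∀ ε ∈ Set.Icc (0 : ℝ) 1, ∀ u v : ℝ,
      |deriv (fNP s ε) (u + v) - deriv (fNP s ε) u| ≤
        C * (|u| ^ (s - 2) + |v| ^ (s - 2)) * |v| := by
  have h2p : (0:ℝ) < (2:ℝ) ^ (s - 2) := Real.rpow_pos_of_pos two_pos _
  refine ⟨(s * s + s + 3) * 2 ^ (s - 2) + (s + 1), by nlinarith, ?_⟩
  rintro ε ⟨hε0, hε1⟩ u v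
  have hderiv : ∀ x : ℝ, deriv (fNP s ε) x = gNP s ε x :=
    fun x => (hasDerivAt_fNP s ε hs hε0 x).deriv
  rw [hderiv, hderiv]
  have hsum : (0:ℝ) ≤ |u| ^ (s - 2) + |v| ^ (s - 2) :=
    add_nonneg (Real.rpow_nonneg (abs_nonneg u) _) (Real.rpow_nonneg (abs_nonneg v) _)
  by_cases hseg : (0:ℝ) ∈ segment ℝ u (u + v)
  · -- u and u+v are on opposite sides of 0
    rw [segment_eq_uIcc, Set.mem_uIcc] at hseg
    have hb : |u| ≤ |v| ∧ |u + v| ≤ |v| := by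
      rcases hseg with ⟨h1, h2⟩ | ⟨h1, h2⟩
      · have hv : 0 ≤ v := by linarith
        rw [abs_of_nonpos h1, abs_of_nonneg h2, abs_of_nonneg hv]
        constructor <;> linarith
      · have hv : v ≤ 0 := by linarith
        rw [abs_of_nonneg h2, abs_of_nonpos h1, abs_of_nonpos hv]
        constructor <;> linarith
      
    have e1 : |u + v| ^ (s - 2) * |u + v| = |u + v| ^ (s - 1) := by
      rw [rpow_mul_self _ (abs_nonneg _) (ne_of_gt (by linarith : (0:ℝ) < s - 2 + 1))]
      ring_nf
    have e2 : |u| ^ (s - 2) * |u| = |u| ^ (s - 1) := by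
      rw [rpow_mul_self _ (abs_nonneg _) (ne_of_gt (by linarith : (0:ℝ) < s - 2 + 1))]
      ring_nf
    have huv2 : |u + v| ^ (s - 2) ≤ |v| ^ (s - 2) :=
      Real.rpow_le_rpow (abs_nonneg _) hb.2 (by linarith)
    calc |gNP s ε (u + v) - gNP s ε u| ≤ |gNP s ε (u + v)| + |gNP s ε u| := abs_sub _ _
    _ ≤ (s + 1) * |u + v| ^ (s - 1) + (s + 1) * |u| ^ (s - 1) :=
        add_le_add (gNP_bound s ε hs hε0 hε1 _) (gNP_bound s ε hs hε0 hε1 _)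
    _ = (s + 1) * (|u + v| ^ (s - 2) * |u + v| + |u| ^ (s - 2) * |u|) := by
        rw [e1, e2]; ring
    _ ≤ (s + 1) * (|v| ^ (s - 2) * |v| + |u| ^ (s - 2) * |v|) := by
        have h1 : |u + v| ^ (s - 2) * |u + v| ≤ |v| ^ (s - 2) * |v| :=
          mul_le_mul huv2 hb.2 (abs_nonneg _) (Real.rpow_nonneg (abs_nonneg v) _)
        have h2 : |u| ^ (s - 2) * |u| ≤ |u| ^ (s - 2) * |v| :=
          mul_le_mul_of_nonneg_left hb.1 (Real.rpow_nonneg (abs_nonneg u) _)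
        have hsp : (0:ℝ) ≤ s + 1 := by linarith
        nlinarith
    _ = (s + 1) * (|u| ^ (s - 2) + |v| ^ (s - 2)) * |v| := by ring
    _ ≤ ((s * s + s + 3) * 2 ^ (s - 2) + (s + 1)) * (|u| ^ (s - 2) + |v| ^ (s - 2)) * |v| := by
        have hrest : (0:ℝ) ≤ (s * s + s + 3) * 2 ^ (s - 2) := by nlinarith
        have := mul_nonneg hsum (abs_nonneg v)
        nlinarith
  · -- segment avoids 0, use MVT
    have hx0 : ∀ x ∈ segment ℝ u (u + v), x ≠ 0 := by
      intro x hx h0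
      exact hseg (h0 ▸ hx)
    have hM : ∀ x ∈ segment ℝ u (u + v), |x| ≤ |u| + |v| := by
      intro x hx
      rw [segment_eq_uIcc, Set.mem_uIcc] at hx
      have h1 : |u + v| ≤ |u| + |v| := abs_add_le u v
      have h2 : |u| ≤ |u| + |v| := le_add_of_nonneg_right (abs_nonneg v)
      rcases hx with ⟨ha, hb⟩ | ⟨ha, hb⟩
      · exact (abs_le_max_abs_abs ha hb).trans (max_le h2 h1)
      · exact (abs_le_max_abs_abs ha hb).trans (max_le h1 h2)
    have hder : ∀ x ∈ segment ℝ u (u + v),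
        HasDerivWithinAt (gNP s ε) (sgn x * hNP s ε x) (segment ℝ u (u + v)) x :=
      fun x hx => (hasDerivAt_gNP s ε hs hε0 (hx0 x hx)).hasDerivWithinAt
    have hA : (0:ℝ) ≤ s * s + s + 3 := by nlinarith
    have hbound : ∀ x ∈ segment ℝ u (u + v),
        ‖sgn x * hNP s ε x‖ ≤ (s * s + s + 3) * (|u| + |v|) ^ (s - 2) := by
      intro x hx
      have h1 : ‖sgn x * hNP s ε x‖ = |hNP s ε x| := by
        rw [Real.norm_eq_abs, abs_mul]
        have h2 : |sgn x| = 1 := by unfold sgn; split <;> simp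
        rw [h2, one_mul]
      rw [h1]
      calc |hNP s ε x| ≤ (s * s + s + 3) * |x| ^ (s - 2) :=
            hNP_bound s ε hs hε0 hε1 (hx0 x hx)
      _ ≤ (s * s + s + 3) * (|u| + |v|) ^ (s - 2) :=
            mul_le_mul_of_nonneg_left
              (Real.rpow_le_rpow (abs_nonneg x) (hM x hx) (by linarith)) hA
    have hmvt := (convex_segment u (u + v)).norm_image_sub_le_of_norm_hasDerivWithin_le
      hder hbound (left_mem_segment ℝ u (u + v)) (right_mem_segment ℝ u (u + v))
    have hv' : ‖(u + v) - u‖ = |v| := by rw [Real.norm_eq_abs]; congr 1; ring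
    rw [hv'] at hmvt
    have hMle : (|u| + |v|) ^ (s - 2) ≤ 2 ^ (s - 2) * (|u| ^ (s - 2) + |v| ^ (s - 2)) := by
      have hpu : (0:ℝ) ≤ |u| ^ (s - 2) := Real.rpow_nonneg (abs_nonneg u) _
      have hpv : (0:ℝ) ≤ |v| ^ (s - 2) := Real.rpow_nonneg (abs_nonneg v) _
      rcases le_total |u| |v| with h | h
      · calc (|u| + |v|) ^ (s - 2) ≤ (2 * |v|) ^ (s - 2) :=
              Real.rpow_le_rpow (by positivity) (by linarith) (by linarith)
        _ = 2 ^ (s - 2) * |v| ^ (s - 2) := Real.mul_rpow (by norm_num) (abs_nonneg v)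
        _ ≤ 2 ^ (s - 2) * (|u| ^ (s - 2) + |v| ^ (s - 2)) := by nlinarith
      · calc (|u| + |v|) ^ (s - 2) ≤ (2 * |u|) ^ (s - 2) :=
              Real.rpow_le_rpow (by positivity) (by linarith) (by linarith)
        _ = 2 ^ (s - 2) * |u| ^ (s - 2) := Real.mul_rpow (by norm_num) (abs_nonneg u)
        _ ≤ 2 ^ (s - 2) * (|u| ^ (s - 2) + |v| ^ (s - 2)) := by nlinarith
    have hK2 : (s * s + s + 3) * (|u| + |v|) ^ (s - 2) ≤
        ((s * s + s + 3) * 2 ^ (s - 2)) * (|u| ^ (s - 2) + |v| ^ (s - 2)) := by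
      calc (s * s + s + 3) * (|u| + |v|) ^ (s - 2)
          ≤ (s * s + s + 3) * (2 ^ (s - 2) * (|u| ^ (s - 2) + |v| ^ (s - 2))) :=
            mul_le_mul_of_nonneg_left hMle hA
      _ = _ := by ring
    calc |gNP s ε (u + v) - gNP s ε u|
        ≤ (s * s + s + 3) * (|u| + |v|) ^ (s - 2) * |v| := hmvt
    _ ≤ ((s * s + s + 3) * 2 ^ (s - 2)) * (|u| ^ (s - 2) + |v| ^ (s - 2)) * |v| :=
        mul_le_mul_of_nonneg_right hK2 (abs_nonneg v)
    _ ≤ ((s * s + s + 3) * 2 ^ (s - 2) + (s + 1)) * (|u| ^ (s - 2) + |v| ^ (s - 2)) * |v| := by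
        nlinarith [mul_nonneg (show (0:ℝ) ≤ s + 1 by linarith)
          (mul_nonneg hsum (abs_nonneg v))]
end
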